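/- arXiv:2009.12782 — 3 statements merged into one kernel-verified Lean document; each statement's English description precedes it below -/
import Mathlib

section
/- Let G be a signed Gauss code, let x be a crossing of G with x⁺ < x⁻, let s = ε(x), and let G′ be obtained from G by switching the crossing x. Then C⁻(G) − C⁻(G′) = s · Σ ε(y), where the sum ranges over all crossings y ≠ x such that exactly one of the two occurrences of y lies strictly between x⁺ and x⁻ in the word of G and that occurrence is the over-occurrence y⁺. (This is the lower skein relation for the Casson-type invariant of knotoids.) -/
/-- A signed Gauss code on a finite set `C` of crossing labels: each crossing `c`
has an over-occurrence `c⁺` at word position `pos c true` and an under-occurrence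
`c⁻` at position `pos c false` (positions are integers, only their order matters),
all `2n` positions are distinct, and each crossing carries a sign `±1`. -/
structure GaussCode (C : Type) [Fintype C] [DecidableEq C] where
  pos : C → Bool → ℤ
  inj : Function.Injective fun p : C × Bool => pos p.1 p.2
  sign : C → ℤ
  sign_unit : ∀ c, sign c = 1 ∨ sign c = -1

namespace GaussCode

variable {C : Type} [Fintype C] [DecidableEq C]

/-- `(x, y)` is an upper skew pair: `x⁺ < y⁻ < x⁻ < y⁺`. -/
def UpperSkew (G : GaussCode C) (x y : C) : Prop :=
  G.pos x true < G.pos y false ∧ G.pos y false < G.pos x false ∧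
    G.pos x false < G.pos y true

/-- `(x, y)` is a lower skew pair: `x⁻ < y⁺ < x⁺ < y⁻`. -/
def LowerSkew (G : GaussCode C) (x y : C) : Prop :=
  G.pos x false < G.pos y true ∧ G.pos y true < G.pos x true ∧
    G.pos x true < G.pos y false

instance (G : GaussCode C) (x y : C) : Decidable (G.UpperSkew x y) := by
  unfold UpperSkew; infer_instance

instance (G : GaussCode C) (x y : C) : Decidable (G.LowerSkew x y) := by
  unfold LowerSkew; infer_instance

/-- `P⁺`: the set of upper skew pairs. -/
def Pplus (G : GaussCode C) : Finset (C × C) :=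
  Finset.univ.filter fun p => G.UpperSkew p.1 p.2

/-- `P⁻`: the set of lower skew pairs. -/
def Pminus (G : GaussCode C) : Finset (C × C) :=
  Finset.univ.filter fun p => G.LowerSkew p.1 p.2

/-- `C⁺`: the sum of the signs `ε(x)·ε(y)` over all upper skew pairs. -/
def Cplus (G : GaussCode C) : ℤ := ∑ p ∈ G.Pplus, G.sign p.1 * G.sign p.2

/-- `C⁻`: the sum of the signs `ε(x)·ε(y)` over all lower skew pairs. -/
def Cminus (G : GaussCode C) : ℤ := ∑ p ∈ G.Pminus, G.sign p.1 * G.sign p.2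

/-- The occurrence at position `q` immediately follows the one at position `p`:
no occurrence of the word lies strictly between them. -/
def Imm (G : GaussCode C) (p q : ℤ) : Prop :=
  p < q ∧ ∀ (d : C) (b : Bool), ¬ (p < G.pos d b ∧ G.pos d b < q)

end GaussCode

/-!
Switching `x` only changes the skew status of pairs containing `x`. Since `x⁺ < x⁻` in `G`
and `x⁻ < x⁺` in `G′`, the only such lower skew pairs are `(y, x)` in `G`, with
`y⁻ < x⁺ < y⁺ < x⁻`, and `(x, y)` in `G′`, with `x⁺ < y⁺ < x⁻ < y⁻` and sign `−ε(x)ε(y)`.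
Both configurations say that `y⁺` lies between `x⁺` and `x⁻` while `y⁻` does not, and
together they cover all such `y`.
-/

theorem Fintype.sum_prod_eq_sum_row_add_sum_col {α M : Type*} [Fintype α] [DecidableEq α]
    [AddCommMonoid M] (f : α × α → M) (x : α)
    (hoff : ∀ a b, a ≠ x → b ≠ x → f (a, b) = 0) (hxx : f (x, x) = 0) :
    ∑ p, f p = ∑ a, f (a, x) + ∑ b, f (x, b) := by
  have hsplit : ∀ p : α × α,
      f p = (if p.2 = x then f (p.1, x) else 0) + (if p.1 = x then f (x, p.2) else 0) := by
    rintro ⟨a, b⟩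
    by_cases ha : a = x <;> by_cases hb : b = x <;> simp_all
  simp only [Finset.sum_congr rfl fun p _ => hsplit p, Finset.sum_add_distrib,
    Fintype.sum_prod_type, Finset.sum_ite_eq', Finset.mem_univ, if_true]
  rw [Finset.sum_comm (f := fun a b => if a = x then f (x, b) else 0)]
  simp

namespace GaussCode

variable {C : Type} [Fintype C] [DecidableEq C]

theorem pos_ne_of_ne (G : GaussCode C) {x y : C} (h : y ≠ x) (b b' : Bool) :
    G.pos y b ≠ G.pos x b' :=
  fun he => h (congrArg Prod.fst (G.inj (a₁ := (y, b)) (a₂ := (x, b')) he))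

theorem LowerSkew.pos_false_lt_pos_true_left {G : GaussCode C} {x y : C}
    (h : G.LowerSkew x y) : G.pos x false < G.pos x true :=
  h.1.trans h.2.1

theorem LowerSkew.pos_true_lt_pos_false_right {G : GaussCode C} {x y : C}
    (h : G.LowerSkew x y) : G.pos y true < G.pos y false :=
  h.2.1.trans h.2.2

theorem not_lowerSkew_self (G : GaussCode C) (x : C) : ¬ G.LowerSkew x x :=
  fun h => lt_asymm h.pos_false_lt_pos_true_left h.pos_true_lt_pos_false_right

def lowerSkewSign (G : GaussCode C) (p : C × C) : ℤ :=
  if G.LowerSkew p.1 p.2 then G.sign p.1 * G.sign p.2 else 0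

theorem Cminus_eq_sum_lowerSkewSign (G : GaussCode C) :
    G.Cminus = ∑ p, G.lowerSkewSign p :=
  Finset.sum_filter _ _

theorem lowerSkewSign_self (G : GaussCode C) (x : C) : G.lowerSkewSign (x, x) = 0 :=
  if_neg (G.not_lowerSkew_self x)

structure IsSwitch (G G' : GaussCode C) (x : C) : Prop where
  pos_self : ∀ b, G'.pos x b = G.pos x (!b)
  pos_of_ne : ∀ y, y ≠ x → ∀ b, G'.pos y b = G.pos y b
  sign_self : G'.sign x = -G.sign x
  sign_of_ne : ∀ y, y ≠ x → G'.sign y = G.sign y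

namespace IsSwitch

variable {G G' : GaussCode C} {x : C}

theorem lowerSkewSign_eq_of_ne (hs : G.IsSwitch G' x) {a b : C} (ha : a ≠ x) (hb : b ≠ x) :
    G'.lowerSkewSign (a, b) = G.lowerSkewSign (a, b) := by
  simp only [lowerSkewSign, LowerSkew, hs.pos_of_ne a ha, hs.pos_of_ne b hb,
    hs.sign_of_ne a ha, hs.sign_of_ne b hb]

theorem lowerSkew_left_iff (hs : G.IsSwitch G' x) {y : C} (hy : y ≠ x) :
    G'.LowerSkew x y ↔ G.pos x true < G.pos y true ∧ G.pos y true < G.pos x false ∧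
      G.pos x false < G.pos y false := by
  simp only [LowerSkew, hs.pos_self, hs.pos_of_ne y hy, Bool.not_true, Bool.not_false]

theorem pos_false_lt_pos_true (hs : G.IsSwitch G' x)
    (hx : G.pos x true < G.pos x false) : G'.pos x false < G'.pos x true := by
  simpa only [hs.pos_self, Bool.not_true, Bool.not_false] using hx

theorem lowerSkewSign_sub_add_lowerSkewSign_sub (hs : G.IsSwitch G' x)
    (hx : G.pos x true < G.pos x false) (y : C) :
    (G.lowerSkewSign (y, x) - G'.lowerSkewSign (y, x)) +
        (G.lowerSkewSign (x, y) - G'.lowerSkewSign (x, y)) =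
      G.sign x * if y ≠ x ∧
          (G.pos x true < G.pos y true ∧ G.pos y true < G.pos x false) ∧
          ¬ (G.pos x true < G.pos y false ∧ G.pos y false < G.pos x false)
        then G.sign y else 0 := by
  by_cases hy : y = x
  · subst hy
    simp [lowerSkewSign_self]
  have hG'yx : ¬ G'.LowerSkew y x := fun h =>
    lt_asymm h.pos_true_lt_pos_false_right (hs.pos_false_lt_pos_true hx)
  have hGxy : ¬ G.LowerSkew x y := fun h => lt_asymm h.pos_false_lt_pos_true_left hx
  have hy_ne_xt : G.pos y false ≠ G.pos x true := G.pos_ne_of_ne hy false true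
  have hy_ne_xf : G.pos y false ≠ G.pos x false := G.pos_ne_of_ne hy false false
  simp only [lowerSkewSign, hG'yx, hGxy, if_false, hs.lowerSkew_left_iff hy, hs.sign_self,
    hs.sign_of_ne y hy, ne_eq, hy, not_false_eq_true, true_and]
  split_ifs <;> simp only [LowerSkew] at * <;> first | ring1 | (exfalso; omega)

end IsSwitch

end GaussCode

/-- lower skein relation: let `x` be a crossing of `G` with
`x⁺ < x⁻`, `s = ε(x)`, and let `G′` be obtained from `G` by switching `x`
(interchanging the markers of the two occurrences of `x` and negating `ε(x)`).
Then `C⁻(G) − C⁻(G′) = s · Σ ε(y)`, the sum over all crossings `y ≠ x` such that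
exactly one occurrence of `y` lies strictly between `x⁺` and `x⁻` and that
occurrence is `y⁺`. -/
theorem casson_lower_skein {C : Type} [Fintype C] [DecidableEq C]
    (G G' : GaussCode C) (x : C)
    (hx : G.pos x true < G.pos x false)
    (hpos_x : ∀ b : Bool, G'.pos x b = G.pos x (!b))
    (hpos : ∀ y : C, y ≠ x → ∀ b : Bool, G'.pos y b = G.pos y b)
    (hsign_x : G'.sign x = - G.sign x)
    (hsign : ∀ y : C, y ≠ x → G'.sign y = G.sign y) :
    G.Cminus - G'.Cminus =
      G.sign x * ∑ y ∈ Finset.univ.filter (fun y : C => y ≠ x ∧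
          (G.pos x true < G.pos y true ∧ G.pos y true < G.pos x false) ∧
          ¬ (G.pos x true < G.pos y false ∧ G.pos y false < G.pos x false)),
        G.sign y := by
  have hs : G.IsSwitch G' x := ⟨hpos_x, hpos, hsign_x, hsign⟩
  rw [G.Cminus_eq_sum_lowerSkewSign, G'.Cminus_eq_sum_lowerSkewSign, ← Finset.sum_sub_distrib,
    Fintype.sum_prod_eq_sum_row_add_sum_col _ x
      (fun a b ha hb => by rw [hs.lowerSkewSign_eq_of_ne ha hb, sub_self])
      (by rw [G.lowerSkewSign_self, G'.lowerSkewSign_self, sub_self]),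
    ← Finset.sum_add_distrib, Finset.sum_filter, Finset.mul_sum]
  exact Finset.sum_congr rfl fun y _ => hs.lowerSkewSign_sub_add_lowerSkewSign_sub hx y
end

section
/- Let G be a signed Gauss code containing distinct crossings x and y with ε(y) = −ε(x), such that the occurrence y⁺ immediately follows x⁺ and the occurrence y⁻ immediately follows x⁻ in the word. Let G′ be the code obtained from G by deleting all four occurrences of x and y. Then C⁺(G′) = C⁺(G) and C⁻(G′) = C⁻(G). (This is invariance of C± under the second Reidemeister move at the Gauss-code level.) -/
namespace GaussCode

variable {C : Type} [Fintype C] [DecidableEq C]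

/-- The code obtained by deleting all four occurrences of the crossings `x` and
`y` (the remaining occurrences keep their positions and markers, signs are
inherited). -/
def erase2 (G : GaussCode C) (x y : C) : GaussCode {d : C // d ≠ x ∧ d ≠ y} where
  pos d b := G.pos d.1 b
  inj := by
    rintro ⟨⟨d, hd⟩, b⟩ ⟨⟨e, he⟩, b'⟩ h
    dsimp only at h
    have h2 := G.inj (a₁ := (d, b)) (a₂ := (e, b')) h
    simp only [Prod.mk.injEq] at h2
    simp only [Prod.mk.injEq, Subtype.mk.injEq]
    exact h2
  sign d := G.sign d.1
  sign_unit d := G.sign_unit d.1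

end GaussCode

/-!
Only pairs involving `x` or `y` are lost when the two crossings are deleted. Since the
occurrences of `y` sit right after those of `x`, every other occurrence lies on the same
side of `x⁺` as of `y⁺`, and of `x⁻` as of `y⁻`; hence `(x, d)` is skew exactly when
`(y, d)` is, and likewise for `(d, x)` and `(d, y)`, while `x` and `y` never form a skew
pair with each other. As `ε(y) = −ε(x)`, the contributions of `x` and of `y` cancel.
-/

open Finset

section PairDeletion

variable {C M : Type} [Fintype C] [DecidableEq C] [AddCommMonoid M] {x y : C}

theorem sum_subtype_ne_and_ne (hxy : x ≠ y) (f : C → M) (h : f x + f y = 0) :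
    ∑ c : {d : C // d ≠ x ∧ d ≠ y}, f c = ∑ c, f c := by
  rw [← add_sum_erase _ _ (mem_univ x),
    ← add_sum_erase _ _ (mem_erase.2 ⟨hxy.symm, mem_univ y⟩), ← add_assoc, h, zero_add]
  exact (sum_subtype _ (fun d => by simp [and_comm]) f).symm

theorem sum_sum_subtype_ne_and_ne (hxy : x ≠ y) (f : C → C → M)
    (hleft : ∀ b, f x b + f y b = 0) (hright : ∀ a, f a x + f a y = 0) :
    ∑ a : {d : C // d ≠ x ∧ d ≠ y}, ∑ b : {d : C // d ≠ x ∧ d ≠ y}, f a b =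
      ∑ a, ∑ b, f a b := by
  calc ∑ a : {d : C // d ≠ x ∧ d ≠ y}, ∑ b : {d : C // d ≠ x ∧ d ≠ y}, f a b
      = ∑ a : {d : C // d ≠ x ∧ d ≠ y}, ∑ b, f a b := by
        simp only [sum_subtype_ne_and_ne hxy _ (hright _)]
    _ = ∑ a, ∑ b, f a b :=
        sum_subtype_ne_and_ne hxy (fun a => ∑ b, f a b)
          (by rw [← sum_add_distrib]; exact sum_eq_zero fun b _ => hleft b)

theorem sum_sum_ite_subtype_ne_and_ne
    (hxy : x ≠ y) (S : C → C → Prop) [DecidableRel S] {w : C → ℤ} (hw : w y = -w x)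
    (hleft : ∀ d, S x d ↔ S y d) (hright : ∀ d, S d x ↔ S d y) :
    ∑ a : {d : C // d ≠ x ∧ d ≠ y}, ∑ b : {d : C // d ≠ x ∧ d ≠ y},
        (if S a b then w a * w b else 0) =
      ∑ a, ∑ b, if S a b then w a * w b else 0 := by
  refine sum_sum_subtype_ne_and_ne hxy (fun a b => if S a b then w a * w b else 0) ?_ ?_
  · intro b
    simp only [← hleft b, hw]
    split_ifs <;> ring
  · intro a
    simp only [← hright a, hw]
    split_ifs <;> ring

end PairDeletion

namespace GaussCode

variable {C : Type} [Fintype C] [DecidableEq C] (G : GaussCode C)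

theorem cplus_eq_sum_sum :
    G.Cplus = ∑ a, ∑ b, if G.UpperSkew a b then G.sign a * G.sign b else 0 := by
  rw [Cplus, Pplus, sum_filter, Fintype.sum_prod_type]

theorem cminus_eq_sum_sum :
    G.Cminus = ∑ a, ∑ b, if G.LowerSkew a b then G.sign a * G.sign b else 0 := by
  rw [Cminus, Pminus, sum_filter, Fintype.sum_prod_type]

theorem pos_ne_pos {d e : C} (h : d ≠ e) (b b' : Bool) : G.pos d b ≠ G.pos e b' :=
  fun heq => h (congrArg Prod.fst (G.inj (a₁ := (d, b)) (a₂ := (e, b')) heq))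

variable {G} {x y : C}

theorem Imm.lt_or_lt {p q : ℤ} (h : G.Imm p q) {d : C} {b : Bool}
    (hp : G.pos d b ≠ p) (hq : G.pos d b ≠ q) : G.pos d b < p ∨ q < G.pos d b := by
  by_contra! hmid
  exact h.2 d b ⟨lt_of_le_of_ne hmid.1 hp.symm, lt_of_le_of_ne hmid.2 hq⟩

theorem lt_pos_or_pos_lt_of_imm (himm : ∀ b, G.Imm (G.pos x b) (G.pos y b))
    {d : C} (hdx : d ≠ x) (hdy : d ≠ y) (b b' : Bool) :
    G.pos d b < G.pos x b' ∨ G.pos y b' < G.pos d b :=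
  (himm b').lt_or_lt (G.pos_ne_pos hdx b b') (G.pos_ne_pos hdy b b')

theorem upperSkew_iff_of_imm (himm : ∀ b, G.Imm (G.pos x b) (G.pos y b)) (d : C) :
    (G.UpperSkew x d ↔ G.UpperSkew y d) ∧ (G.UpperSkew d x ↔ G.UpperSkew d y) := by
  have hover := (himm true).1
  have hunder := (himm false).1
  by_cases hd : d = x ∨ d = y
  · rcases hd with rfl | rfl <;> simp only [UpperSkew] <;> omega
  · push Not at hd
    have h := lt_pos_or_pos_lt_of_imm himm hd.1 hd.2
    have := h true true; have := h true false; have := h false true; have := h false false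
    simp only [UpperSkew]
    omega

theorem lowerSkew_iff_of_imm (himm : ∀ b, G.Imm (G.pos x b) (G.pos y b)) (d : C) :
    (G.LowerSkew x d ↔ G.LowerSkew y d) ∧ (G.LowerSkew d x ↔ G.LowerSkew d y) := by
  have hover := (himm true).1
  have hunder := (himm false).1
  by_cases hd : d = x ∨ d = y
  · rcases hd with rfl | rfl <;> simp only [LowerSkew] <;> omega
  · push Not at hd
    have h := lt_pos_or_pos_lt_of_imm himm hd.1 hd.2
    have := h true true; have := h true false; have := h false true; have := h false false
    simp only [LowerSkew]
    omega

theorem cplus_erase2 (hxy : x ≠ y) (hsign : G.sign y = -G.sign x)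
    (himm : ∀ b, G.Imm (G.pos x b) (G.pos y b)) : (G.erase2 x y).Cplus = G.Cplus := by
  rw [cplus_eq_sum_sum, cplus_eq_sum_sum]
  exact sum_sum_ite_subtype_ne_and_ne hxy G.UpperSkew hsign
    (fun d => (upperSkew_iff_of_imm himm d).1) (fun d => (upperSkew_iff_of_imm himm d).2)

theorem cminus_erase2 (hxy : x ≠ y) (hsign : G.sign y = -G.sign x)
    (himm : ∀ b, G.Imm (G.pos x b) (G.pos y b)) : (G.erase2 x y).Cminus = G.Cminus := by
  rw [cminus_eq_sum_sum, cminus_eq_sum_sum]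
  exact sum_sum_ite_subtype_ne_and_ne hxy G.LowerSkew hsign
    (fun d => (lowerSkew_iff_of_imm himm d).1) (fun d => (lowerSkew_iff_of_imm himm d).2)

end GaussCode

/-- second Reidemeister move: if `x ≠ y` are crossings with
`ε(y) = −ε(x)` such that `y⁺` immediately follows `x⁺` and `y⁻` immediately
follows `x⁻` in the word, then deleting all four occurrences of `x` and `y`
leaves `C⁺` and `C⁻` unchanged. -/
theorem casson_R2_invariance {C : Type} [Fintype C] [DecidableEq C]
    (G : GaussCode C) (x y : C) (hxy : x ≠ y)
    (hsign : G.sign y = - G.sign x)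
    (himm_over : G.Imm (G.pos x true) (G.pos y true))
    (himm_under : G.Imm (G.pos x false) (G.pos y false)) :
    (G.erase2 x y).Cplus = G.Cplus ∧ (G.erase2 x y).Cminus = G.Cminus := by
  have himm : ∀ b, G.Imm (G.pos x b) (G.pos y b) := Bool.forall_bool.2 ⟨himm_under, himm_over⟩
  exact ⟨G.cplus_erase2 hxy hsign himm, G.cminus_erase2 hxy hsign himm⟩
end

section
/- For every ℤ-enriched signed Gauss code with n crossings, ‖CH⁺‖ + ‖CH⁻‖ ≤ ⌊n²/4⌋, where ‖q‖ denotes the sum of the absolute values of the coordinates of the element q of the free ℤ-module on the set of subgroups of ℤ. -/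
/-- A ℤ-enriched signed Gauss code: a signed Gauss code together with a function
`w` assigning to each crossing `c` the class in `H₁(annulus) ≅ ℤ` of the loop
obtained by smoothing `c`. -/
structure EGaussCode (C : Type) [Fintype C] [DecidableEq C] extends GaussCode C where
  w : C → ℤ

namespace EGaussCode

variable {C : Type} [Fintype C] [DecidableEq C]

/-- The subgroup `H(x, y) ≤ ℤ` generated by `w x` and `w y`. -/
def H (G : EGaussCode C) (x y : C) : AddSubgroup ℤ :=
  AddSubgroup.closure {G.w x, G.w y}

/-- `CH⁺`: the element of the free ℤ-module on the set of subgroups of `ℤ`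
given by the sum, over all upper skew pairs `(x, y)`, of `ε(x)·ε(y)` times the
basis element indexed by `H(x, y)`. -/
noncomputable def CHplus (G : EGaussCode C) : AddSubgroup ℤ →₀ ℤ :=
  ∑ p ∈ G.toGaussCode.Pplus,
    Finsupp.single (G.H p.1 p.2) (G.sign p.1 * G.sign p.2)

/-- `CH⁻`: the analogous sum over all lower skew pairs. -/
noncomputable def CHminus (G : EGaussCode C) : AddSubgroup ℤ →₀ ℤ :=
  ∑ p ∈ G.toGaussCode.Pminus,
    Finsupp.single (G.H p.1 p.2) (G.sign p.1 * G.sign p.2)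

/-- The norm `‖q‖`: the sum of the absolute values of the coordinates of `q`. -/
noncomputable def norm (q : AddSubgroup ℤ →₀ ℤ) : ℕ :=
  q.sum fun _ v => v.natAbs

end EGaussCode

/-!
Each skew pair contributes a signed basis vector of norm one, so `‖CH⁺‖ + ‖CH⁻‖ ≤ |P⁺| + |P⁻|`.
Split the crossings into the set `A` of those whose over-occurrence comes first and its
complement `B`. An upper skew pair `(x, y)` has `x ∈ A`, `y ∈ B`, and a lower skew pair `(x, y)`
has `x ∈ B`, `y ∈ A`; no `(x, y)` is upper skew while `(y, x)` is lower skew. Hence `P⁺` and the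
swap of `P⁻` are disjoint subsets of `A × B`, and `|A| |B| ≤ n² / 4` by AM-GM.
-/

open Finset

namespace GaussCode

variable {C : Type} [Fintype C] [DecidableEq C] (G : GaussCode C)

lemma natAbs_sign_mul_sign (x y : C) : (G.sign x * G.sign y).natAbs = 1 := by
  rcases G.sign_unit x with hx | hx <;> rcases G.sign_unit y with hy | hy <;> simp [hx, hy]

def overFirst : Finset C := univ.filter fun c => G.pos c true < G.pos c false

lemma mem_overFirst {c : C} : c ∈ G.overFirst ↔ G.pos c true < G.pos c false := by
  simp [overFirst]

lemma Pplus_subset_overFirst_product : G.Pplus ⊆ G.overFirst ×ˢ G.overFirstᶜ := by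
  intro p hp
  obtain ⟨h₁, h₂, h₃⟩ := (mem_filter.mp hp).2
  simp only [mem_product, mem_compl, mem_overFirst]
  omega

lemma image_swap_Pminus_subset_overFirst_product :
    G.Pminus.image Prod.swap ⊆ G.overFirst ×ˢ G.overFirstᶜ := by
  intro _ h
  obtain ⟨p, hp, rfl⟩ := mem_image.mp h
  obtain ⟨h₁, h₂, h₃⟩ := (mem_filter.mp hp).2
  simp only [mem_product, mem_compl, mem_overFirst, Prod.fst_swap, Prod.snd_swap]
  omega

lemma disjoint_Pplus_image_swap_Pminus : Disjoint G.Pplus (G.Pminus.image Prod.swap) := by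
  rw [disjoint_left]
  intro _ hp h
  obtain ⟨q, hq, rfl⟩ := mem_image.mp h
  obtain ⟨h₁, -, -⟩ := (mem_filter.mp hp).2
  obtain ⟨h₂, -, -⟩ := (mem_filter.mp hq).2
  exact lt_asymm h₁ h₂

theorem card_Pplus_add_card_Pminus_le : #G.Pplus + #G.Pminus ≤ Fintype.card C ^ 2 / 4 := by
  have hcard : #G.Pplus + #G.Pminus ≤ #G.overFirst * #G.overFirstᶜ := by
    rw [← card_image_of_injective G.Pminus Prod.swap_injective,
      ← card_union_of_disjoint G.disjoint_Pplus_image_swap_Pminus, ← card_product]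
    exact card_le_card (union_subset G.Pplus_subset_overFirst_product
      G.image_swap_Pminus_subset_overFirst_product)
  have hsplit : #G.overFirst + #G.overFirstᶜ = Fintype.card C := card_add_card_compl _
  rw [Nat.le_div_iff_mul_le four_pos, ← hsplit]
  calc (#G.Pplus + #G.Pminus) * 4 ≤ 4 * #G.overFirst * #G.overFirstᶜ := by
        linarith
    _ ≤ (#G.overFirst + #G.overFirstᶜ) ^ 2 := four_mul_le_sq_add _ _

end GaussCode

namespace EGaussCode

lemma norm_add_le (q r : AddSubgroup ℤ →₀ ℤ) : norm (q + r) ≤ norm q + norm r := by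
  classical
  unfold norm
  rw [Finsupp.sum_of_support_subset _ Finsupp.support_add _ fun _ _ => rfl,
    Finsupp.sum_of_support_subset q subset_union_left _ fun _ _ => rfl,
    Finsupp.sum_of_support_subset r subset_union_right _ fun _ _ => rfl, ← sum_add_distrib]
  exact sum_le_sum fun a _ => Int.natAbs_add_le (q a) (r a)

lemma norm_single (K : AddSubgroup ℤ) (v : ℤ) : norm (Finsupp.single K v) = v.natAbs :=
  Finsupp.sum_single_index rfl

lemma norm_sum_single_le {ι : Type*} (s : Finset ι) (K : ι → AddSubgroup ℤ) (v : ι → ℤ) :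
    norm (∑ i ∈ s, Finsupp.single (K i) (v i)) ≤ ∑ i ∈ s, (v i).natAbs := by
  simpa only [norm_single] using
    le_sum_of_subadditive norm (by simp [norm]) norm_add_le s fun i => Finsupp.single (K i) (v i)

variable {C : Type} [Fintype C] [DecidableEq C] (G : EGaussCode C)

lemma norm_sum_signed_single_le_card (s : Finset (C × C)) :
    norm (∑ p ∈ s, Finsupp.single (G.H p.1 p.2) (G.sign p.1 * G.sign p.2)) ≤ #s :=
  (norm_sum_single_le _ _ _).trans_eq <| by
    simp only [G.natAbs_sign_mul_sign, sum_const, smul_eq_mul, mul_one]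

end EGaussCode

/-- for every ℤ-enriched signed Gauss code with `n` crossings,
`‖CH⁺‖ + ‖CH⁻‖ ≤ ⌊n²/4⌋`, where `‖q‖` is the sum of the absolute values of the
coordinates of `q` in the free ℤ-module on the set of subgroups of `ℤ`. -/
theorem cassonH_norm_sum_le_crossing_sq_div_four {C : Type} [Fintype C] [DecidableEq C]
    (G : EGaussCode C) :
    EGaussCode.norm G.CHplus + EGaussCode.norm G.CHminus ≤
      Fintype.card C ^ 2 / 4 :=
  calc EGaussCode.norm G.CHplus + EGaussCode.norm G.CHminus
      ≤ #G.Pplus + #G.Pminus :=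
        add_le_add (G.norm_sum_signed_single_le_card _) (G.norm_sum_signed_single_le_card _)
    _ ≤ Fintype.card C ^ 2 / 4 := G.card_Pplus_add_card_Pminus_le
end
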